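/- Let (A,0) be a gr-field (a graded division ring with zero differential) and let (B,d) be a graded commutative acyclic dg-division algebra. Suppose A→B is a dg-extension. If B has characteristic different from 2, then this extension is not dg-separable. -/

import Mathlib

open scoped TensorProduct

section DGCore

variable {A : Type} [Ring A] {B : Type} [Ring B]

/-- `(A, d)` together with the grading `𝒜` is a differential graded ring:
`d` is a square-zero additive endomorphism of degree `1` satisfying the graded
Leibniz rule. -/
structure IsDGRing (𝒜 : ℤ → AddSubgroup A) (d : A →+ A) : Prop where
  d_sq : ∀ x, d (d x) = 0
  d_mem : ∀ (i : ℤ), ∀ x ∈ 𝒜 i, d x ∈ 𝒜 (i + 1)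
  leibniz : ∀ (i : ℤ) (a b : A), a ∈ 𝒜 i →
    d (a * b) = d a * b + ((Int.negOnePow i : ℤ)) • (a * d b)

/-- A homomorphism of differential graded rings (a dg-extension). -/
structure IsDGHom (𝒜 : ℤ → AddSubgroup A) (dA : A →+ A)
    (𝒝 : ℤ → AddSubgroup B) (dB : B →+ B) (φ : A →+* B) : Prop where
  map_mem : ∀ (i : ℤ), ∀ x ∈ 𝒜 i, φ x ∈ 𝒝 i
  map_d : ∀ x, φ (dA x) = dB (φ x)

/-- Graded commutativity: `a * b = (-1)^{|a||b|} b * a` for homogeneous elements. -/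
def IsGradedComm (𝒜 : ℤ → AddSubgroup A) : Prop :=
  ∀ (i j : ℤ) (a b : A), a ∈ 𝒜 i → b ∈ 𝒜 j →
    a * b = ((Int.negOnePow (i * j) : ℤ)) • (b * a)

/-- A dg-ring is acyclic if its homology vanishes, i.e. every cycle is a boundary. -/
def IsAcyclic (d : A →+ A) : Prop := ∀ x, d x = 0 → ∃ y, d y = x

/-- A dg left ideal: a graded additive subgroup closed under the differential and
under left multiplication. -/
def IsDGLeftIdeal (𝒜 : ℤ → AddSubgroup A) [GradedRing 𝒜] (d : A →+ A)
    (I : AddSubgroup A) : Prop :=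
  (∀ (a : A), ∀ x ∈ I, a * x ∈ I) ∧ (∀ x ∈ I, d x ∈ I) ∧
    (∀ x ∈ I, ∀ i : ℤ, (DirectSum.decompose 𝒜 x i : A) ∈ I)

/-- A dg right ideal. -/
def IsDGRightIdeal (𝒜 : ℤ → AddSubgroup A) [GradedRing 𝒜] (d : A →+ A)
    (I : AddSubgroup A) : Prop :=
  (∀ (a : A), ∀ x ∈ I, x * a ∈ I) ∧ (∀ x ∈ I, d x ∈ I) ∧
    (∀ x ∈ I, ∀ i : ℤ, (DirectSum.decompose 𝒜 x i : A) ∈ I)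

/-- A dg-division ring: the only dg left ideals and the only dg right ideals
are `0` and the whole ring. -/
def IsDGDivisionRing (𝒜 : ℤ → AddSubgroup A) [GradedRing 𝒜] (d : A →+ A) : Prop :=
  (0 : A) ≠ 1 ∧ (∀ I, IsDGLeftIdeal 𝒜 d I → I = ⊥ ∨ I = ⊤) ∧
    (∀ I, IsDGRightIdeal 𝒜 d I → I = ⊥ ∨ I = ⊤)

/-- A graded division ring (gr-field): every nonzero homogeneous element is invertible. -/
def IsGradedDivisionRing (𝒜 : ℤ → AddSubgroup A) : Prop :=
  (0 : A) ≠ 1 ∧ ∀ (i : ℤ) (x : A), x ∈ 𝒜 i → x ≠ 0 → IsUnit x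

/-- The relations defining `B ⊗[A] B` inside `B ⊗[ℤ] B`, for an extension `φ : A →+* B`. -/
def sepRel (φ : A →+* B) : Submodule ℤ (B ⊗[ℤ] B) :=
  Submodule.span ℤ {x | ∃ (b b' : B) (a : A),
    x = (b * φ a) ⊗ₜ[ℤ] b' - b ⊗ₜ[ℤ] (φ a * b')}

/-- The balanced tensor product `B ⊗[A] B` for an extension `φ : A →+* B`. -/
abbrev SepTensor (φ : A →+* B) := (B ⊗[ℤ] B) ⧸ sepRel φ

/-- The canonical projection `B ⊗[ℤ] B → B ⊗[A] B`. -/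
noncomputable def sepMk (φ : A →+* B) : B ⊗[ℤ] B →ₗ[ℤ] SepTensor φ := (sepRel φ).mkQ

/-- The multiplication map `μ : B ⊗[A] B → B`. -/
noncomputable def sepMul (φ : A →+* B) : SepTensor φ →ₗ[ℤ] B :=
  Submodule.liftQ _ (TensorProduct.lift (LinearMap.mul ℤ B)) (by
    rw [sepRel, Submodule.span_le]
    rintro x ⟨b, b', a, rfl⟩
    change TensorProduct.lift (LinearMap.mul ℤ B) ((b * φ a) ⊗ₜ[ℤ] b' - b ⊗ₜ[ℤ] (φ a * b')) = 0
    simp [mul_assoc])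

/-- Left multiplication by `b` on `B ⊗[A] B`. -/
noncomputable def sepLMul (φ : A →+* B) (b : B) : SepTensor φ →ₗ[ℤ] SepTensor φ :=
  Submodule.mapQ _ _ (TensorProduct.map (LinearMap.mulLeft ℤ b) LinearMap.id) (by
    rw [sepRel, Submodule.span_le]
    rintro x ⟨b₀, b', a, rfl⟩
    change TensorProduct.map (LinearMap.mulLeft ℤ b) LinearMap.id
      ((b₀ * φ a) ⊗ₜ[ℤ] b' - b₀ ⊗ₜ[ℤ] (φ a * b')) ∈ sepRel φ
    simp only [map_sub, TensorProduct.map_tmul, LinearMap.mulLeft_apply, LinearMap.id_apply]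
    exact Submodule.subset_span ⟨b * b₀, b', a, by simp [mul_assoc]⟩)

/-- Right multiplication by `b` on `B ⊗[A] B`. -/
noncomputable def sepRMul (φ : A →+* B) (b : B) : SepTensor φ →ₗ[ℤ] SepTensor φ :=
  Submodule.mapQ _ _ (TensorProduct.map LinearMap.id (LinearMap.mulRight ℤ b)) (by
    rw [sepRel, Submodule.span_le]
    rintro x ⟨b₀, b', a, rfl⟩
    change TensorProduct.map LinearMap.id (LinearMap.mulRight ℤ b)
      ((b₀ * φ a) ⊗ₜ[ℤ] b' - b₀ ⊗ₜ[ℤ] (φ a * b')) ∈ sepRel φ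
    simp only [map_sub, TensorProduct.map_tmul, LinearMap.mulRight_apply, LinearMap.id_apply]
    exact Submodule.subset_span ⟨b₀, b' * b, a, by simp [mul_assoc]⟩)

/-- The grading on `B ⊗[A] B`: the degree `n` part is generated by the classes of
`b ⊗ b'` with `b, b'` homogeneous of degrees summing to `n`. -/
noncomputable def sepGrading (φ : A →+* B) (𝒝 : ℤ → AddSubgroup B) (n : ℤ) :
    AddSubgroup (SepTensor φ) :=
  AddSubgroup.closure {x | ∃ (i j : ℤ) (b b' : B), b ∈ 𝒝 i ∧ b' ∈ 𝒝 j ∧ i + j = n ∧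
    x = sepMk φ (b ⊗ₜ[ℤ] b')}

/-- The sign involution `b ↦ (-1)^{|b|} b` of a graded ring. -/
noncomputable def signMap (𝒝 : ℤ → AddSubgroup B) [GradedRing 𝒝] : B →+ B :=
  (DirectSum.toAddMonoid fun i =>
      (smulAddHom ℤ B ((Int.negOnePow i : ℤ))).comp (𝒝 i).subtype).comp
    (DirectSum.decomposeAddEquiv 𝒝).toAddMonoidHom

lemma signMap_of_mem (𝒝 : ℤ → AddSubgroup B) [GradedRing 𝒝] {i : ℤ} {x : B}
    (hx : x ∈ 𝒝 i) : signMap 𝒝 x = ((Int.negOnePow i : ℤ)) • x := by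
  classical
  unfold signMap
  simp only [AddMonoidHom.comp_apply, AddEquiv.coe_toAddMonoidHom,
    DirectSum.decomposeAddEquiv_apply, DirectSum.decompose_of_mem 𝒝 hx,
    DirectSum.toAddMonoid_of]
  rfl

/-- The differential `d ⊗ 1 + ε ⊗ d` on `B ⊗[ℤ] B` (with Koszul sign). -/
noncomputable def sepDiffPre (𝒝 : ℤ → AddSubgroup B) [GradedRing 𝒝] (dB : B →+ B) :
    B ⊗[ℤ] B →ₗ[ℤ] B ⊗[ℤ] B :=
  TensorProduct.map dB.toIntLinearMap LinearMap.id +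
    TensorProduct.map (signMap 𝒝).toIntLinearMap dB.toIntLinearMap

/-- `D` is the differential induced on `B ⊗[A] B` by `d_B ⊗ 1 + ε ⊗ d_B`. -/
def IsSepDiff (φ : A →+* B) (𝒝 : ℤ → AddSubgroup B) [GradedRing 𝒝] (dB : B →+ B)
    (D : SepTensor φ →+ SepTensor φ) : Prop :=
  ∀ x : B ⊗[ℤ] B, D (sepMk φ x) = sepMk φ (sepDiffPre 𝒝 dB x)

/-- `ρ : B → B ⊗[A] B` is a `B`-`B`-bimodule section of the multiplication map. -/
def IsSepSection (φ : A →+* B) (ρ : B →+ SepTensor φ) : Prop :=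
  (∀ b, sepMul φ (ρ b) = b) ∧
    (∀ (b₁ c b₂ : B), ρ (b₁ * c * b₂) = sepLMul φ b₁ (sepRMul φ b₂ (ρ c)))

/-- The extension `φ : A →+* B` is separable: the multiplication map
`B ⊗[A] B → B` splits as a bimodule map. -/
def IsSeparableExt (φ : A →+* B) : Prop := ∃ ρ : B →+ SepTensor φ, IsSepSection φ ρ

/-- The extension `φ : A →+* B` of graded rings is graded-separable: the multiplication
map `B ⊗[A] B → B` splits as a map of graded bimodules. -/
def IsGrSeparable (φ : A →+* B) (𝒝 : ℤ → AddSubgroup B) : Prop :=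
  ∃ ρ : B →+ SepTensor φ, IsSepSection φ ρ ∧
    ∀ (n : ℤ), ∀ b ∈ 𝒝 n, ρ b ∈ sepGrading φ 𝒝 n

/-- The dg-extension `φ : (A,d_A) →  (B,d_B)` is dg-separable: the multiplication map
`B ⊗[A] B → B` splits as a map of differential graded bimodules. -/
def IsDGSeparable (φ : A →+* B) (𝒝 : ℤ → AddSubgroup B) [GradedRing 𝒝]
    (dB : B →+ B) : Prop :=
  ∃ D : SepTensor φ →+ SepTensor φ, IsSepDiff φ 𝒝 dB D ∧
    ∃ ρ : B →+ SepTensor φ, IsSepSection φ ρ ∧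
      (∀ (n : ℤ), ∀ b ∈ 𝒝 n, ρ b ∈ sepGrading φ 𝒝 n) ∧
      (∀ b, D (ρ b) = ρ (dB b))

end DGCore

/-!
A bimodule section `ρ` of `B ⊗[A] B → B` with `e := ρ 1` homogeneous of degree `0` turns the
differential into an inner graded derivation: applying `b ⊗ b' ↦ d b * b'` to `b e = e b` gives
`d b = p b - (-1)^{|b|} b p` with `p` of degree `1`. Graded commutativity forces
`p b = (-1)^{|b|} b p`, so `d = 0`, and then `1` cannot be a boundary.
-/

lemma IsDGRing.d_mul_of_d_eq_zero {B : Type} [Ring B] {𝒝 : ℤ → AddSubgroup B}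
    [GradedRing 𝒝] {dB : B →+ B} (hB : IsDGRing 𝒝 dB) {x : B} (hx : dB x = 0) (b : B) :
    dB (b * x) = dB b * x := by
  refine DirectSum.Decomposition.inductionOn 𝒝 (by simp) (fun {i} c => ?_)
    (fun b b' hb hb' => by rw [add_mul, map_add, map_add, hb, hb', add_mul]) b
  rw [hB.leibniz i c x c.2, hx, mul_zero, smul_zero, add_zero]

section SepTensor

variable {A B : Type} [Ring A] [Ring B] {φ : A →+* B}

lemma sepMul_mk (b b' : B) : sepMul φ (sepMk φ (b ⊗ₜ[ℤ] b')) = b * b' := rfl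

lemma sepLMul_mk (b b₀ b' : B) :
    sepLMul φ b (sepMk φ (b₀ ⊗ₜ[ℤ] b')) = sepMk φ ((b * b₀) ⊗ₜ[ℤ] b') := rfl

lemma sepRMul_mk (b b₀ b' : B) :
    sepRMul φ b (sepMk φ (b₀ ⊗ₜ[ℤ] b')) = sepMk φ (b₀ ⊗ₜ[ℤ] (b' * b)) := rfl

lemma SepTensor.linearMap_ext {C : Type} [AddCommGroup C] {f g : SepTensor φ →ₗ[ℤ] C}
    (h : ∀ b b' : B, f (sepMk φ (b ⊗ₜ[ℤ] b')) = g (sepMk φ (b ⊗ₜ[ℤ] b'))) : f = g :=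
  Submodule.linearMap_qext _ (TensorProduct.ext' h)

lemma sepLMul_one : sepLMul φ (1 : B) = LinearMap.id := by
  refine SepTensor.linearMap_ext fun b b' => ?_
  rw [sepLMul_mk, one_mul, LinearMap.id_apply]

lemma sepRMul_one : sepRMul φ (1 : B) = LinearMap.id := by
  refine SepTensor.linearMap_ext fun b b' => ?_
  rw [sepRMul_mk, mul_one, LinearMap.id_apply]

variable (φ) in
noncomputable def sepDiffMul (dB : B →+ B)
    (hbal : ∀ (b : B) (a : A), dB (b * φ a) = dB b * φ a) : SepTensor φ →ₗ[ℤ] B :=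
  Submodule.liftQ _ (TensorProduct.lift ((LinearMap.mul ℤ B).comp dB.toIntLinearMap)) (by
    rw [sepRel, Submodule.span_le]
    rintro x ⟨b, b', a, rfl⟩
    change TensorProduct.lift ((LinearMap.mul ℤ B).comp dB.toIntLinearMap)
      ((b * φ a) ⊗ₜ[ℤ] b' - b ⊗ₜ[ℤ] (φ a * b')) = 0
    simp [hbal, mul_assoc])

variable {dB : B →+ B} {hbal : ∀ (b : B) (a : A), dB (b * φ a) = dB b * φ a}

lemma sepDiffMul_mk (b b' : B) :
    sepDiffMul φ dB hbal (sepMk φ (b ⊗ₜ[ℤ] b')) = dB b * b' := rfl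

lemma sepDiffMul_sepRMul (b : B) (X : SepTensor φ) :
    sepDiffMul φ dB hbal (sepRMul φ b X) = sepDiffMul φ dB hbal X * b := by
  have h : (sepDiffMul φ dB hbal).comp (sepRMul φ b)
      = (LinearMap.mulRight ℤ b).comp (sepDiffMul φ dB hbal) := by
    refine SepTensor.linearMap_ext fun b₀ b' => ?_
    simp only [LinearMap.comp_apply, LinearMap.mulRight_apply, sepRMul_mk, sepDiffMul_mk,
      mul_assoc]
  exact LinearMap.congr_fun h X

lemma sepDiffMul_sepLMul_of_mem {𝒝 : ℤ → AddSubgroup B} (hB : IsDGRing 𝒝 dB) {j : ℤ}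
    {b : B} (hb : b ∈ 𝒝 j) (X : SepTensor φ) :
    sepDiffMul φ dB hbal (sepLMul φ b X)
      = dB b * sepMul φ X + (Int.negOnePow j : ℤ) • (b * sepDiffMul φ dB hbal X) := by
  have h : (sepDiffMul φ dB hbal).comp (sepLMul φ b)
      = (LinearMap.mulLeft ℤ (dB b)).comp (sepMul φ)
        + (Int.negOnePow j : ℤ) • (LinearMap.mulLeft ℤ b).comp (sepDiffMul φ dB hbal) := by
    refine SepTensor.linearMap_ext fun b₀ b' => ?_
    simp only [LinearMap.comp_apply, LinearMap.add_apply, LinearMap.smul_apply,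
      LinearMap.mulLeft_apply, sepLMul_mk, sepDiffMul_mk, sepMul_mk, hB.leibniz j b b₀ hb,
      add_mul, smul_mul_assoc, mul_assoc]
  exact LinearMap.congr_fun h X

lemma sepDiffMul_mem_of_mem_sepGrading {𝒝 : ℤ → AddSubgroup B} [GradedRing 𝒝]
    (hB : IsDGRing 𝒝 dB) {n : ℤ} {X : SepTensor φ} (hX : X ∈ sepGrading φ 𝒝 n) :
    sepDiffMul φ dB hbal X ∈ 𝒝 (n + 1) := by
  suffices sepGrading φ 𝒝 n ≤ (𝒝 (n + 1)).comap (sepDiffMul φ dB hbal).toAddMonoidHom from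
    this hX
  refine (AddSubgroup.closure_le _).2 ?_
  rintro _ ⟨i, j, b, b', hb, hb', rfl, rfl⟩
  have h := SetLike.mul_mem_graded (hB.d_mem i b hb) hb'
  rwa [add_right_comm] at h

lemma IsSepSection.d_eq_gradedCommutator {𝒝 : ℤ → AddSubgroup B} (hB : IsDGRing 𝒝 dB)
    {ρ : B →+ SepTensor φ} (hρ : IsSepSection φ ρ) {j : ℤ} {b : B} (hb : b ∈ 𝒝 j) :
    dB b = sepDiffMul φ dB hbal (ρ 1) * b
      - (Int.negOnePow j : ℤ) • (b * sepDiffMul φ dB hbal (ρ 1)) := by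
  have hright : ρ b = sepRMul φ b (ρ 1) := by
    simpa [sepLMul_one] using hρ.2 1 1 b
  have hleft : ρ b = sepLMul φ b (ρ 1) := by
    simpa [sepRMul_one] using hρ.2 b 1 1
  have h := congrArg (sepDiffMul φ dB hbal) (hright.symm.trans hleft)
  rw [sepDiffMul_sepRMul, sepDiffMul_sepLMul_of_mem hB hb, hρ.1, mul_one] at h
  rw [h, add_sub_cancel_right]

end SepTensor

section Separable

variable {A B : Type} [Ring A] [Ring B] {𝒝 : ℤ → AddSubgroup B} [GradedRing 𝒝]
  {dB : B →+ B} {φ : A →+* B}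

lemma IsDGSeparable.isGrSeparable (h : IsDGSeparable φ 𝒝 dB) : IsGrSeparable φ 𝒝 := by
  obtain ⟨-, -, ρ, hρ, hgr, -⟩ := h
  exact ⟨ρ, hρ, hgr⟩

lemma IsGrSeparable.d_eq_zero (hsep : IsGrSeparable φ 𝒝) (hB : IsDGRing 𝒝 dB)
    (hcomm : IsGradedComm 𝒝) (hφ : ∀ a, dB (φ a) = 0) (b : B) : dB b = 0 := by
  obtain ⟨ρ, hρ, hgr⟩ := hsep
  have hbal : ∀ (b : B) (a : A), dB (b * φ a) = dB b * φ a := fun b a =>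
    hB.d_mul_of_d_eq_zero (hφ a) b
  have hp : sepDiffMul φ dB hbal (ρ 1) ∈ 𝒝 1 := by
    simpa using sepDiffMul_mem_of_mem_sepGrading hB (hgr 0 1 SetLike.GradedOne.one_mem)
  refine DirectSum.Decomposition.inductionOn 𝒝 (map_zero dB) (fun {j} b => ?_)
    (fun b b' hb hb' => by rw [map_add, hb, hb', add_zero]) b
  rw [hρ.d_eq_gradedCommutator (hbal := hbal) hB b.2, hcomm 1 j _ b hp b.2, one_mul, sub_self]

end Separable

theorem not_dgSeparable_of_grField_to_acyclic_general
    {A B : Type} [Ring A] [Ring B]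
    (𝒜 : ℤ → AddSubgroup A) (𝒝 : ℤ → AddSubgroup B) [GradedRing 𝒝]
    (dB : B →+ B)
    (hB : IsDGRing 𝒝 dB) (hBcomm : IsGradedComm 𝒝) (hBacyclic : IsAcyclic dB)
    (hBdiv : IsDGDivisionRing 𝒝 dB)
    (φ : A →+* B) (hφ : IsDGHom 𝒜 (0 : A →+ A) 𝒝 dB φ) :
    ¬ IsDGSeparable φ 𝒝 dB := by
  intro hsep
  have hφ_cycle : ∀ a, dB (φ a) = 0 := fun a => by simpa using (hφ.map_d a).symm
  have hd : ∀ b, dB b = 0 := hsep.isGrSeparable.d_eq_zero hB hBcomm hφ_cycle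
  obtain ⟨y, hy⟩ := hBacyclic 1 (hd 1)
  exact hBdiv.1 (hd y ▸ hy)

/-- A dg-extension from a gr-field `(A,0)` (zero differential) to a
graded commutative acyclic dg-division algebra `(B,d)` of characteristic different
from `2` is never dg-separable. -/
theorem not_dgSeparable_of_grField_to_acyclic
    {A B : Type} [Ring A] [Ring B]
    (𝒜 : ℤ → AddSubgroup A) [GradedRing 𝒜] (𝒝 : ℤ → AddSubgroup B) [GradedRing 𝒝]
    (dB : B →+ B)
    (hAgr : IsGradedDivisionRing 𝒜)
    (hB : IsDGRing 𝒝 dB) (hBcomm : IsGradedComm 𝒝) (hBacyclic : IsAcyclic dB)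
    (hBdiv : IsDGDivisionRing 𝒝 dB) (hchar : (2 : B) ≠ 0)
    (φ : A →+* B) (hφ : IsDGHom 𝒜 (0 : A →+ A) 𝒝 dB φ) :
    ¬ IsDGSeparable φ 𝒝 dB :=
  not_dgSeparable_of_grField_to_acyclic_general 𝒜 𝒝 dB hB hBcomm hBacyclic hBdiv φ hφ
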